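/- arXiv:2207.02580 — 2 statements merged into one kernel-verified Lean document; each statement's English description precedes it below -/
import Mathlib

section
/- (State evolution of the GPK algorithm.) Let f : 𝔽₂ⁿ → 𝔽₂ᵐ and y ∈ 𝔽₂ᵐ. Let H_k denote the Hadamard matrix indexed by 𝔽₂ᵏ × 𝔽₂ᵏ with entries H_k(z, x) = (1/√(2ᵏ))·(−1)^(x·z), let U_f be the linear operator on ℂ-valued functions on 𝔽₂ⁿ × 𝔽₂ᵐ given by (U_f g)(x, z) = g(x, z ⊕ f(x)), and let |0, y⟩ denote the basis vector supported at (0, y) ∈ 𝔽₂ⁿ × 𝔽₂ᵐ. Then the state (H_n ⊗ I) U_f (H_n ⊗ H_m) |0, y⟩ has components, at each (z, w) ∈ 𝔽₂ⁿ × 𝔽₂ᵐ, equal to [ (1/2ⁿ) Σ_{x ∈ 𝔽₂ⁿ} (−1)^( (f(x)·y) ⊕ (x·z) ) ] · (1/√(2ᵐ))·(−1)^(y·w). -/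
/-- The sign `(−1)^a ∈ ℂ` associated to a bit `a ∈ 𝔽₂`. -/
noncomputable def sgn (a : ZMod 2) : ℂ := (-1 : ℂ) ^ a.val

/-- The pairing `x·z = Σᵢ xᵢ·zᵢ ∈ 𝔽₂` of two binary strings. -/
def dotp {k : ℕ} (x z : Fin k → ZMod 2) : ZMod 2 := ∑ i, x i * z i

/-- The `k`-qubit Hadamard matrix, with entry `H_k(z, x) = (1/√(2ᵏ))·(−1)^(x·z)`. -/
noncomputable def Had (k : ℕ) :
    Matrix (Fin k → ZMod 2) (Fin k → ZMod 2) ℂ :=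
  fun z x => ((Real.sqrt (2 ^ k) : ℝ)⁻¹ : ℂ) * sgn (dotp x z)

/-- The operator `U_f`: `(U_f g)(x, z) = g(x, z ⊕ f(x))`. -/
def Uf {n m : ℕ} (f : (Fin n → ZMod 2) → (Fin m → ZMod 2))
    (g : (Fin n → ZMod 2) × (Fin m → ZMod 2) → ℂ) :
    (Fin n → ZMod 2) × (Fin m → ZMod 2) → ℂ :=
  fun p => g (p.1, p.2 + f p.1)

/-- The tensor product `H_n ⊗ H_m` acting on ℂ-valued functions on `𝔽₂ⁿ × 𝔽₂ᵐ`. -/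
noncomputable def HadTensorHad {n m : ℕ}
    (g : (Fin n → ZMod 2) × (Fin m → ZMod 2) → ℂ) :
    (Fin n → ZMod 2) × (Fin m → ZMod 2) → ℂ :=
  fun p => ∑ q : (Fin n → ZMod 2) × (Fin m → ZMod 2),
    Had n p.1 q.1 * Had m p.2 q.2 * g q

/-- The tensor product `H_n ⊗ I` acting on ℂ-valued functions on `𝔽₂ⁿ × 𝔽₂ᵐ`. -/
noncomputable def HadTensorId {n m : ℕ}
    (g : (Fin n → ZMod 2) × (Fin m → ZMod 2) → ℂ) :
    (Fin n → ZMod 2) × (Fin m → ZMod 2) → ℂ :=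
  fun p => ∑ x : Fin n → ZMod 2, Had n p.1 x * g (x, p.2)

/-- The basis vector `|0, y⟩` supported at `(0, y) ∈ 𝔽₂ⁿ × 𝔽₂ᵐ`. -/
def ketZeroY {n m : ℕ} (y : Fin m → ZMod 2) :
    (Fin n → ZMod 2) × (Fin m → ZMod 2) → ℂ :=
  fun p => if p = ((fun _ => 0), y) then 1 else 0

/-! Phase kickback: `H_n ⊗ H_m` turns `|0, y⟩` into the product of the uniform state and the
`y`-th column of `H_m`. Since `w ↦ (−1)^(y·w)` is a character, shifting the second register by
`f(x)` only multiplies the `x`-th amplitude by `(−1)^(f(x)·y)`; the last `H_n` then contributes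
`(−1)^(x·z)` and a second factor `1/√(2ⁿ)`. -/

lemma sgn_zero : sgn 0 = 1 := by simp [sgn]

lemma sgn_add (a b : ZMod 2) : sgn (a + b) = sgn a * sgn b := by
  unfold sgn
  rw [← pow_add, neg_one_pow_eq_pow_mod_two (R := ℂ) (n := a.val + b.val), ← ZMod.val_add]

lemma dotp_comm {k : ℕ} (x z : Fin k → ZMod 2) : dotp x z = dotp z x := by
  simp only [dotp, mul_comm]

lemma dotp_zero_left {k : ℕ} (z : Fin k → ZMod 2) : dotp (fun _ => 0) z = 0 := by
  simp [dotp]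

lemma dotp_add_right {k : ℕ} (x a b : Fin k → ZMod 2) :
    dotp x (a + b) = dotp x a + dotp x b := by
  simp only [dotp, Pi.add_apply, mul_add, Finset.sum_add_distrib]

lemma inv_sqrt_two_pow_mul_self (k : ℕ) :
    ((Real.sqrt (2 ^ k) : ℝ)⁻¹ : ℂ) * ((Real.sqrt (2 ^ k) : ℝ)⁻¹ : ℂ) = ((2 : ℂ) ^ k)⁻¹ := by
  rw [← mul_inv, ← Complex.ofReal_mul, Real.mul_self_sqrt (by positivity)]
  push_cast
  rfl

lemma had_apply_zero_right (k : ℕ) (z : Fin k → ZMod 2) :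
    Had k z (fun _ => 0) = ((Real.sqrt (2 ^ k) : ℝ)⁻¹ : ℂ) := by
  rw [Had, dotp_zero_left, sgn_zero, mul_one]

lemma had_add_left (k : ℕ) (a b x : Fin k → ZMod 2) :
    Had k (a + b) x = sgn (dotp x b) * Had k a x := by
  simp only [Had, dotp_add_right, sgn_add]
  ring

lemma hadTensorHad_single {n m : ℕ} (q p : (Fin n → ZMod 2) × (Fin m → ZMod 2)) :
    HadTensorHad (fun p' => if p' = q then 1 else 0) p = Had n p.1 q.1 * Had m p.2 q.2 := by
  simp only [HadTensorHad, mul_ite, mul_one, mul_zero, Finset.sum_ite_eq', Finset.mem_univ,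
    if_true]

lemma hadTensorHad_ketZeroY {n m : ℕ} (y : Fin m → ZMod 2)
    (p : (Fin n → ZMod 2) × (Fin m → ZMod 2)) :
    HadTensorHad (ketZeroY y) p = Had n p.1 (fun _ => 0) * Had m p.2 y :=
  hadTensorHad_single _ p

/-- State evolution of the GPK algorithm: the state
`(H_n ⊗ I) U_f (H_n ⊗ H_m) |0, y⟩` has, at each `(z, w)`, component
`[(1/2ⁿ) Σ_x (−1)^((f(x)·y) ⊕ (x·z))] · (1/√(2ᵐ))·(−1)^(y·w)`. -/
theorem gpk_state_evolution {n m : ℕ}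
    (f : (Fin n → ZMod 2) → (Fin m → ZMod 2)) (y : Fin m → ZMod 2)
    (z : Fin n → ZMod 2) (w : Fin m → ZMod 2) :
    HadTensorId (Uf f (HadTensorHad (ketZeroY y))) (z, w) =
      (((2 : ℂ) ^ n)⁻¹ * ∑ x : Fin n → ZMod 2, sgn (dotp (f x) y + dotp x z)) *
        (((Real.sqrt (2 ^ m) : ℝ)⁻¹ : ℂ) * sgn (dotp y w)) := by
  have summand (x : Fin n → ZMod 2) :
      Had n z x * (Had n x (fun _ => 0) * Had m (w + f x) y) =
        ((2 : ℂ) ^ n)⁻¹ * sgn (dotp (f x) y + dotp x z) *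
          (((Real.sqrt (2 ^ m) : ℝ)⁻¹ : ℂ) * sgn (dotp y w)) := by
    rw [had_apply_zero_right, add_comm w, had_add_left, Had, Had, dotp_comm y (f x), sgn_add,
      ← inv_sqrt_two_pow_mul_self]
    ring
  calc HadTensorId (Uf f (HadTensorHad (ketZeroY y))) (z, w)
      = ∑ x, Had n z x * (Had n x (fun _ => 0) * Had m (w + f x) y) := by
        simp only [HadTensorId, Uf, hadTensorHad_ketZeroY]
    _ = _ := by
        simp only [summand, ← Finset.mul_sum, ← Finset.sum_mul]
end

section
/- (Correctness of the Bernstein–Vazirani algorithm.) Let r ∈ 𝔽₂ⁿ and let f : 𝔽₂ⁿ → 𝔽₂ be the linear function f(x) = r·x. Then for every z ∈ 𝔽₂ⁿ, (1/2ⁿ) Σ_{x ∈ 𝔽₂ⁿ} (−1)^( f(x) ⊕ (x·z) ) equals 1 if z = r and 0 otherwise. Hence the final state of the Bernstein–Vazirani algorithm is exactly |r⟩ₙ, and measuring it yields r with certainty. -/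
/-!
Since `f(x) ⊕ x·z = x·(z − r)`, everything reduces to the orthogonality of the characters
`x ↦ (−1)^(x·w)` of `𝔽₂ⁿ`. Such a character is a product over the coordinates, so its sum
factors as `∏ᵢ Σ_{a ∈ 𝔽₂} (−1)^(a wᵢ)`, and each factor is `2` if `wᵢ = 0` and `0` otherwise.
-/

open Finset Matrix

namespace AddChar

lemma map_sum_eq_prod {ι A M : Type*} [AddCommMonoid A] [CommMonoid M] (ψ : AddChar A M)
    (s : Finset ι) (f : ι → A) : ψ (∑ i ∈ s, f i) = ∏ i ∈ s, ψ (f i) := by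
  classical
  induction s using Finset.induction_on with
  | empty => simp
  | insert a s ha ih => rw [sum_insert ha, prod_insert ha, map_add_eq_mul, ih]

theorem sum_dotProduct_eq_ite {R R' ι : Type*} [CommRing R] [Fintype R] [DecidableEq R]
    [CommRing R'] [IsDomain R'] [Fintype ι] [DecidableEq ι] {ψ : AddChar R R'}
    (hψ : ψ.IsPrimitive) (w : ι → R) :
    ∑ x : ι → R, ψ (x ⬝ᵥ w) = if w = 0 then (Fintype.card R : R') ^ Fintype.card ι else 0 :=
  calc ∑ x : ι → R, ψ (x ⬝ᵥ w) = ∑ x : ι → R, ∏ i, ψ (x i * w i) := by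
        simp only [dotProduct, map_sum_eq_prod]
    _ = ∏ i, ∑ a : R, ψ (a * w i) := (Fintype.prod_sum fun i (a : R) => ψ (a * w i)).symm
    _ = ∏ i, if w i = 0 then (Fintype.card R : R') else 0 := by
        simp only [sum_mulShift _ hψ, Nat.cast_ite, Nat.cast_zero]
    _ = _ := by
        rw [Fintype.prod_ite_zero, prod_const, card_univ]
        simp only [funext_iff, Pi.zero_apply]

end AddChar

noncomputable def sgnChar : AddChar (ZMod 2) ℂ :=
  AddChar.zmodChar 2 (by norm_num : (-1 : ℂ) ^ 2 = 1)

lemma sgnChar_apply (a : ZMod 2) : sgnChar a = sgn a := rfl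

lemma sgnChar_isPrimitive : sgnChar.IsPrimitive :=
  .of_ne_one <| AddChar.ne_one_iff.2 ⟨1, by norm_num [sgnChar_apply, sgn, ZMod.val_one]⟩

lemma dotp_eq_dotProduct {k : ℕ} (x z : Fin k → ZMod 2) : dotp x z = x ⬝ᵥ z := rfl

lemma sum_sgn_dotp {k : ℕ} (w : Fin k → ZMod 2) :
    ∑ x, sgn (dotp x w) = if w = 0 then 2 ^ k else 0 := by
  simpa [sgnChar_apply, dotp_eq_dotProduct] using
    AddChar.sum_dotProduct_eq_ite sgnChar_isPrimitive w

/-- Correctness of the Bernstein–Vazirani algorithm: if `f(x) = r·x`, then for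
every `z`, `(1/2ⁿ) Σ_x (−1)^(f(x) ⊕ (x·z))` is `1` if `z = r` and `0`
otherwise, so the final state of the algorithm is exactly `|r⟩ₙ`. -/
theorem bernstein_vazirani {n : ℕ} (r : Fin n → ZMod 2)
    (f : (Fin n → ZMod 2) → ZMod 2) (hf : ∀ x, f x = dotp r x)
    (z : Fin n → ZMod 2) :
    ((2 : ℂ) ^ n)⁻¹ * ∑ x : Fin n → ZMod 2, sgn (f x + dotp x z) =
      (if z = r then 1 else 0) := by
  have hphase : ∀ x, f x + dotp x z = dotp x (z - r) := fun x => by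
    simp only [hf, dotp_eq_dotProduct]
    rw [dotProduct_sub, CharTwo.sub_eq_add, dotProduct_comm r, add_comm]
  simp_rw [hphase, sum_sgn_dotp, sub_eq_zero]
  split_ifs <;> simp
end
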